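/- arXiv:2302.07721 — 8 statements merged into one kernel-verified Lean document; each statement's English description precedes it below -/
import Mathlib

section
/- Let U ⊆ ℝ^d be a nonempty open set. Suppose u : [0,∞) × {1,…,n} → ℝ^d and c : [0,∞) × {1,…,n} → ℝ are differentiable in the first variable, β₀, β₁, …, β_d : {1,…,n} → ℝ^d, r > 0, and Q ∈ ℝ^{n×n} is an intensity matrix, such that for all x ≥ 0, all states z ∈ {1,…,n} and all y ∈ U the drift identity ⟨β₀(z) + Σ_{i=1}^d y_i β_i(z), u(x,z)⟩ − r⟨u(x,z), y⟩ − ⟨∂_x u(x,z), y⟩ + Σ_{j=1}^n ⟨u(x,j) − u(x,z), y⟩ Q_{zj} = r c(x,z) + ∂_x c(x,z) − Σ_{j=1}^n (c(x,j) − c(x,z)) Q_{zj} holds. Then for all x ≥ 0 and all z ∈ {1,…,n}: ∂_x u(x,z) = Σ_{i=1}^d ⟨β_i(z), u(x,z)⟩ e_i − r u(x,z) + Σ_{j=1}^n (u(x,j) − u(x,z)) Q_{zj}, and ∂_x c(x,z) = ⟨β₀(z), u(x,z)⟩ − r c(x,z) + Σ_{j=1}^n (c(x,j) − c(x,z)) Q_{zj}.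 -/
open Matrix BigOperators

/-- The deterministic core of the theorem on affine energy-futures term structures:
under the affine drift identity (the no-arbitrage condition conditioned on
`(Y_t, Z_t) = (y, z)`), the curves `u` and `c` satisfy the stated linear ODEs. -/
theorem stmt_0 (n d : ℕ) (hn : 1 ≤ n) (hd : 1 ≤ d)
    (U : Set (Fin d → ℝ)) (hUne : U.Nonempty) (hUopen : IsOpen U)
    (u u' : ℝ → Fin n → Fin d → ℝ) (c c' : ℝ → Fin n → ℝ)
    (hu : ∀ x : ℝ, 0 ≤ x → ∀ z : Fin n, HasDerivAt (fun t => u t z) (u' x z) x)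
    (hc : ∀ x : ℝ, 0 ≤ x → ∀ z : Fin n, HasDerivAt (fun t => c t z) (c' x z) x)
    (β₀ : Fin n → Fin d → ℝ) (β : Fin d → Fin n → Fin d → ℝ)
    (r : ℝ) (hr : 0 < r)
    (Q : Matrix (Fin n) (Fin n) ℝ)
    (hQoff : ∀ i j : Fin n, i ≠ j → 0 ≤ Q i j)
    (hQrow : ∀ i : Fin n, ∑ j, Q i j = 0)
    (hdrift : ∀ x : ℝ, 0 ≤ x → ∀ z : Fin n, ∀ y ∈ U,
      (β₀ z + ∑ i, y i • β i z) ⬝ᵥ u x z - r * (u x z ⬝ᵥ y) - u' x z ⬝ᵥ y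
        + ∑ j, ((u x j - u x z) ⬝ᵥ y) * Q z j
      = r * c x z + c' x z - ∑ j, (c x j - c x z) * Q z j) :
    ∀ x : ℝ, 0 ≤ x → ∀ z : Fin n,
      (u' x z = (∑ i, (β i z ⬝ᵥ u x z) • (Pi.single i 1 : Fin d → ℝ))
          - r • u x z + ∑ j, Q z j • (u x j - u x z)) ∧
      (c' x z = β₀ z ⬝ᵥ u x z - r * c x z + ∑ j, (c x j - c x z) * Q z j) := by
  intro x hx z
  obtain ⟨y₀, hy₀⟩ := hUne
  set w : Fin d → ℝ :=
    (fun i => β i z ⬝ᵥ u x z) - r • u x z - u' x z + ∑ j, Q z j • (u x j - u x z) with hw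
  have key : ∀ y ∈ U,
      w ⬝ᵥ y = r * c x z + c' x z - ∑ j, (c x j - c x z) * Q z j - β₀ z ⬝ᵥ u x z := by
    intro y hy
    have h := hdrift x hx z y hy
    rw [← h, hw]
    simp only [dotProduct, Pi.add_apply, Pi.sub_apply, Pi.smul_apply, Finset.sum_apply,
      smul_eq_mul, Pi.sub_apply, Finset.sum_sub_distrib, Finset.sum_add_distrib,
      Finset.mul_sum, Finset.sum_mul, add_mul, sub_mul, mul_sub]
    have s1 : ∑ a : Fin d, ∑ b : Fin d, β a z b * u x z b * y a
        = ∑ b : Fin d, ∑ a : Fin d, y a * β a z b * u x z b := by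
      rw [Finset.sum_comm]
      exact Finset.sum_congr rfl fun b _ => Finset.sum_congr rfl fun a _ => by ring
    have s2 : ∑ a : Fin d, ∑ j : Fin n, Q z j * u x j a * y a
        = ∑ j : Fin n, ∑ a : Fin d, u x j a * y a * Q z j := by
      rw [Finset.sum_comm]
      exact Finset.sum_congr rfl fun _ _ => Finset.sum_congr rfl fun _ _ => by ring
    have s3 : ∑ a : Fin d, ∑ j : Fin n, Q z j * u x z a * y a
        = ∑ j : Fin n, ∑ a : Fin d, u x z a * y a * Q z j := by
      rw [Finset.sum_comm]
      exact Finset.sum_congr rfl fun _ _ => Finset.sum_congr rfl fun _ _ => by ring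
    have s4 : ∑ a : Fin d, r * u x z a * y a = ∑ a : Fin d, r * (u x z a * y a) :=
      Finset.sum_congr rfl fun _ _ => by ring
    rw [s1, s2, s3, s4]; ring
  have hw0 : w = 0 := by
    funext i
    obtain ⟨ε, hε, hball⟩ := Metric.isOpen_iff.mp hUopen y₀ hy₀
    have hmem : y₀ + (ε/2) • (Pi.single i 1 : Fin d → ℝ) ∈ U := by
      apply hball
      rw [Metric.mem_ball, dist_eq_norm]
      simp only [add_sub_cancel_left, norm_smul]
      rw [Pi.norm_single]
      simp only [norm_one, mul_one, Real.norm_eq_abs]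
      rw [abs_of_pos (by linarith)]; linarith
    have h1 := key _ hmem
    have h2 := key y₀ hy₀
    rw [dotProduct_add, dotProduct_smul, dotProduct_single, mul_one, smul_eq_mul,
      key y₀ hy₀] at h1
    have hz : ε/2 * w i = 0 := by linarith
    exact (mul_eq_zero.mp hz).resolve_left (by positivity)
  constructor
  · have : u' x z = (fun i => β i z ⬝ᵥ u x z) - r • u x z + ∑ j, Q z j • (u x j - u x z) := by
      have := hw0
      rw [hw] at this
      funext i
      have hi := congrFun this i
      simp only [Pi.add_apply, Pi.sub_apply, Pi.zero_apply] at hi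
      simp only [Pi.add_apply, Pi.sub_apply]
      linarith
    rw [this]
    congr 1
    congr 1
    funext i
    simp [Pi.single_apply, Finset.sum_ite_eq']
  · have h2 := key y₀ hy₀
    rw [hw0, zero_dotProduct] at h2
    linarith
end

section
/- Suppose u : [0,∞) × {1,…,n} → ℝ^d and c : [0,∞) × {1,…,n} → ℝ are differentiable in the first variable, r > 0, Q ∈ ℝ^{n×n} is an intensity matrix, and for each state z ∈ {1,…,n} the affine hull of the set {u(x,z) : x ≥ 0} is all of ℝ^d. Let b : ℝ^d × {1,…,n} → ℝ^d satisfy, for all x ≥ 0, all z and all y ∈ ℝ^d, the identity ⟨u(x,z), b(y,z)⟩ = r⟨u(x,z), y⟩ + ⟨∂_x u(x,z), y⟩ − Σ_{j=1}^n ⟨u(x,j) − u(x,z), y⟩ Q_{zj} + r c(x,z) + ∂_x c(x,z) − Σ_{j=1}^n (c(x,j) − c(x,z)) Q_{zj}. Then b is affine in y: there exist β₀, β₁, …, β_d : {1,…,n} → ℝ^d such that b(y,z) = β₀(z) + Σ_{i=1}^d y_i β_i(z) for all y ∈ ℝ^d and all z ∈ {1,…,n}. -/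
open Matrix BigOperators

private lemma sum_dotProduct' {m d : ℕ} (s : Finset (Fin m)) (f : Fin m → Fin d → ℝ)
    (v : Fin d → ℝ) : (∑ j ∈ s, f j) ⬝ᵥ v = ∑ j ∈ s, f j ⬝ᵥ v := by
  simp only [dotProduct, Finset.sum_apply, Finset.sum_mul]
  exact Finset.sum_comm

private lemma dotProduct_sum' {m d : ℕ} (s : Finset (Fin m)) (f : Fin m → Fin d → ℝ)
    (v : Fin d → ℝ) : v ⬝ᵥ (∑ j ∈ s, f j) = ∑ j ∈ s, v ⬝ᵥ f j := by
  simp only [dotProduct, Finset.sum_apply, Finset.mul_sum]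
  exact Finset.sum_comm

/-- Deterministic core of the proposition: under the affine structure, the
non-degeneracy condition (A2) and the no-arbitrage drift condition for energy
futures, the drift `b` of the driving process is affine in `y`. -/
theorem stmt_1 (n d : ℕ) (hn : 1 ≤ n) (hd : 1 ≤ d)
    (u u' : ℝ → Fin n → Fin d → ℝ) (c c' : ℝ → Fin n → ℝ)
    (hu : ∀ x : ℝ, 0 ≤ x → ∀ z : Fin n, HasDerivAt (fun t => u t z) (u' x z) x)
    (hc : ∀ x : ℝ, 0 ≤ x → ∀ z : Fin n, HasDerivAt (fun t => c t z) (c' x z) x)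
    (r : ℝ) (hr : 0 < r)
    (Q : Matrix (Fin n) (Fin n) ℝ)
    (hQoff : ∀ i j : Fin n, i ≠ j → 0 ≤ Q i j)
    (hQrow : ∀ i : Fin n, ∑ j, Q i j = 0)
    (hA2 : ∀ z : Fin n, affineSpan ℝ {v : Fin d → ℝ | ∃ x : ℝ, 0 ≤ x ∧ v = u x z} = ⊤)
    (b : (Fin d → ℝ) → Fin n → Fin d → ℝ)
    (hdrift : ∀ x : ℝ, 0 ≤ x → ∀ z : Fin n, ∀ y : Fin d → ℝ,
      u x z ⬝ᵥ b y z
      = r * (u x z ⬝ᵥ y) + u' x z ⬝ᵥ y - (∑ j, ((u x j - u x z) ⬝ᵥ y) * Q z j)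
        + r * c x z + c' x z - ∑ j, (c x j - c x z) * Q z j) :
    ∃ (β₀ : Fin n → Fin d → ℝ) (β : Fin d → Fin n → Fin d → ℝ),
      ∀ (y : Fin d → ℝ) (z : Fin n), b y z = β₀ z + ∑ i, y i • β i z := by
  refine ⟨fun z => b 0 z, fun i z => b (Pi.single i 1) z - b 0 z, fun y z => ?_⟩
  set w : Fin d → ℝ := b y z - (b 0 z + ∑ i, y i • (b (Pi.single i 1) z - b 0 z)) with hw
  have key : ∀ x : ℝ, 0 ≤ x → u x z ⬝ᵥ w = 0 := by
    intro x hx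
    set M : Fin d → ℝ := r • u x z + u' x z - ∑ j, Q z j • (u x j - u x z) with hMdef
    set K : ℝ := r * c x z + c' x z - ∑ j, (c x j - c x z) * Q z j with hKdef
    have hM : ∀ y' : Fin d → ℝ, u x z ⬝ᵥ b y' z = M ⬝ᵥ y' + K := by
      intro y'
      rw [hdrift x hx z y', hMdef, hKdef, sub_dotProduct, add_dotProduct,
        smul_dotProduct, sum_dotProduct']
      have hs : ∑ j, (Q z j • (u x j - u x z)) ⬝ᵥ y'
          = ∑ j, ((u x j - u x z) ⬝ᵥ y') * Q z j :=
        Finset.sum_congr rfl fun j _ => by rw [smul_dotProduct, smul_eq_mul, mul_comm]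
      rw [hs, smul_eq_mul]
      ring
    have hterm : ∀ i : Fin d,
        u x z ⬝ᵥ (y i • (b (Pi.single i 1) z - b 0 z)) = y i * M i := by
      intro i
      rw [dotProduct_smul, dotProduct_sub, hM, hM, dotProduct_zero,
        dotProduct_single, smul_eq_mul]
      ring
    have h1 : M ⬝ᵥ y = ∑ i, y i * M i := by
      simp [dotProduct, mul_comm]
    rw [hw, dotProduct_sub, dotProduct_add, dotProduct_sum']
    simp only [hterm]
    rw [hM y, hM 0, dotProduct_zero, h1]
    ring
  have hwzero : w = 0 := by
    have hL : ∃ L : (Fin d → ℝ) →ₗ[ℝ] ℝ, ∀ v, L v = v ⬝ᵥ w :=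
      ⟨{ toFun := fun v => v ⬝ᵥ w
         map_add' := fun a b => add_dotProduct a b w
         map_smul' := fun t a => smul_dotProduct t a w }, fun _ => rfl⟩
    obtain ⟨L, hLdef⟩ := hL
    have hsub : affineSpan ℝ {v : Fin d → ℝ | ∃ x : ℝ, 0 ≤ x ∧ v = u x z}
        ≤ (LinearMap.ker L).toAffineSubspace := by
      rw [affineSpan_le]
      rintro v ⟨x, hx, rfl⟩
      show u x z ∈ LinearMap.ker L
      rw [LinearMap.mem_ker, hLdef]
      exact key x hx
    rw [hA2 z] at hsub
    have hwmem : w ∈ LinearMap.ker L := hsub (AffineSubspace.mem_top ℝ _ w)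
    rw [LinearMap.mem_ker, hLdef] at hwmem
    exact dotProduct_self_eq_zero.mp hwmem
  exact sub_eq_zero.mp hwzero
end

section
/- Let U ⊆ ℝ^d be a nonempty open set, let v : [0,∞) → ℝ^d be differentiable with v(0) = 0 and set u₀ := v'(0). Let N ∈ ℕ, Λ₁,…,Λ_N : ℝ^d × {1,…,n} → ℝ, b₁,…,b_N ∈ ℝ^d, symmetric matrices a₁,…,a_N ∈ ℝ^{d×d}, and β₀,…,β_d : {1,…,n} → ℝ^d, A₀,…,A_d : {1,…,n} → ℝ^{d×d}. Define b(y,z) = Σ_{i=1}^N Λ_i(y,z) b_i + β₀(z) + Σ_{i=1}^d y_i β_i(z) and a(y,z) = Σ_{i=1}^N Λ_i(y,z) a_i + A₀(z) + Σ_{i=1}^d y_i A_i(z). Assume: (i) ⟨v(x), b_i⟩ − (1/2)⟨v(x), a_i v(x)⟩ = 0 for all x ≥ 0 and all i = 1,…,N; (ii) there is a function H : [0,∞) × {1,…,n} → ℝ such that H(x,z) = ⟨v(x), b(y,z)⟩ − (1/2)⟨v(x), a(y,z) v(x)⟩ − ⟨v'(x), y⟩ + ⟨u₀, y⟩ for all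 x ≥ 0, all z and all y ∈ U. Then v solves the system of Riccati ODEs: for all x ≥ 0 and all z ∈ {1,…,n}, v'(x) − u₀ = Σ_{i=1}^d ⟨β_i(z), v(x)⟩ e_i − (1/2) Σ_{i=1}^d ⟨v(x), A_i(z) v(x)⟩ e_i. -/
open Matrix BigOperators

private lemma dp_sum {d : ℕ} {ι : Type*} (s : Finset ι) (v : Fin d → ℝ) (w : ι → Fin d → ℝ) :
    v ⬝ᵥ (∑ i ∈ s, w i) = ∑ i ∈ s, v ⬝ᵥ w i := by
  simp only [dotProduct, Finset.sum_apply, Finset.mul_sum]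
  rw [Finset.sum_comm]

private lemma sum_mv {d : ℕ} {ι : Type*} (s : Finset ι) (M : ι → Matrix (Fin d) (Fin d) ℝ)
    (v : Fin d → ℝ) : (∑ i ∈ s, M i).mulVec v = ∑ i ∈ s, (M i).mulVec v := by
  funext j
  simp only [Matrix.mulVec, dotProduct, Finset.sum_apply, Matrix.sum_apply,
    Finset.sum_mul]
  rw [Finset.sum_comm]

/-- First conclusion (the Riccati system, equation (14)) of the theorem on affine
interest-rate term structures: `v` solves the system of Riccati ODEs. -/
theorem stmt_2 (n d : ℕ) (hn : 1 ≤ n) (hd : 1 ≤ d)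
    (U : Set (Fin d → ℝ)) (hUne : U.Nonempty) (hUopen : IsOpen U)
    (v v' : ℝ → Fin d → ℝ)
    (hv : ∀ x : ℝ, 0 ≤ x → HasDerivAt v (v' x) x)
    (hv0 : v 0 = 0)
    (u₀ : Fin d → ℝ) (hu₀ : u₀ = v' 0)
    (N : ℕ) (Λ : Fin N → (Fin d → ℝ) → Fin n → ℝ)
    (bv : Fin N → Fin d → ℝ) (am : Fin N → Matrix (Fin d) (Fin d) ℝ)
    (ham : ∀ i, (am i).IsSymm)
    (β₀ : Fin n → Fin d → ℝ) (β : Fin d → Fin n → Fin d → ℝ)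
    (A₀ : Fin n → Matrix (Fin d) (Fin d) ℝ) (A : Fin d → Fin n → Matrix (Fin d) (Fin d) ℝ)
    (b : (Fin d → ℝ) → Fin n → Fin d → ℝ)
    (hb : ∀ (y : Fin d → ℝ) (z : Fin n),
      b y z = (∑ i, Λ i y z • bv i) + β₀ z + ∑ i, y i • β i z)
    (a : (Fin d → ℝ) → Fin n → Matrix (Fin d) (Fin d) ℝ)
    (ha : ∀ (y : Fin d → ℝ) (z : Fin n),
      a y z = (∑ i, Λ i y z • am i) + A₀ z + ∑ i, y i • A i z)
    (hvanish : ∀ x : ℝ, 0 ≤ x → ∀ i : Fin N,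
      v x ⬝ᵥ bv i - (1 / 2 : ℝ) * (v x ⬝ᵥ (am i).mulVec (v x)) = 0)
    (H : ℝ → Fin n → ℝ)
    (hH : ∀ x : ℝ, 0 ≤ x → ∀ z : Fin n, ∀ y ∈ U,
      H x z = v x ⬝ᵥ b y z - (1 / 2 : ℝ) * (v x ⬝ᵥ (a y z).mulVec (v x))
        - v' x ⬝ᵥ y + u₀ ⬝ᵥ y) :
    ∀ x : ℝ, 0 ≤ x → ∀ z : Fin n,
      v' x - u₀ = (∑ i, (β i z ⬝ᵥ v x) • (Pi.single i 1 : Fin d → ℝ))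
        - (1 / 2 : ℝ) • ∑ i, (v x ⬝ᵥ (A i z).mulVec (v x)) • (Pi.single i 1 : Fin d → ℝ) := by

  intro x hx z
  set c : Fin d → ℝ := fun j =>
    v x ⬝ᵥ β j z - (1 / 2 : ℝ) * (v x ⬝ᵥ (A j z).mulVec (v x)) - v' x j + u₀ j with hc
  have expand : ∀ y : Fin d → ℝ,
      v x ⬝ᵥ b y z - (1 / 2 : ℝ) * (v x ⬝ᵥ (a y z).mulVec (v x))
        - v' x ⬝ᵥ y + u₀ ⬝ᵥ y
      = (v x ⬝ᵥ β₀ z - (1 / 2 : ℝ) * (v x ⬝ᵥ (A₀ z).mulVec (v x)))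
        + ∑ j, y j * c j := by
    intro y
    rw [hb, ha]
    have h1 : v x ⬝ᵥ ((∑ i, Λ i y z • bv i) + β₀ z + ∑ i, y i • β i z)
        = (∑ i, Λ i y z * (v x ⬝ᵥ bv i)) + v x ⬝ᵥ β₀ z
          + ∑ i, y i * (v x ⬝ᵥ β i z) := by
      simp [dotProduct_add, dp_sum, dotProduct_smul, smul_eq_mul]
    have h2 : v x ⬝ᵥ (((∑ i, Λ i y z • am i) + A₀ z + ∑ i, y i • A i z).mulVec (v x))
        = (∑ i, Λ i y z * (v x ⬝ᵥ (am i).mulVec (v x)))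
          + v x ⬝ᵥ (A₀ z).mulVec (v x)
          + ∑ i, y i * (v x ⬝ᵥ (A i z).mulVec (v x)) := by
      simp [Matrix.add_mulVec, sum_mv, Matrix.smul_mulVec,
        dotProduct_add, dp_sum, dotProduct_smul, smul_eq_mul]
    rw [h1, h2]
    have h3 : v' x ⬝ᵥ y = ∑ j, y j * v' x j := by
      simp [dotProduct, mul_comm]
    have h4 : u₀ ⬝ᵥ y = ∑ j, y j * u₀ j := by
      simp [dotProduct, mul_comm]
    have h5 : ∑ i, Λ i y z * (v x ⬝ᵥ bv i)
        - (1 / 2 : ℝ) * ∑ i, Λ i y z * (v x ⬝ᵥ (am i).mulVec (v x))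
        = ∑ i, Λ i y z * (v x ⬝ᵥ bv i - (1 / 2 : ℝ) * (v x ⬝ᵥ (am i).mulVec (v x))) := by
      rw [Finset.mul_sum, ← Finset.sum_sub_distrib]
      exact Finset.sum_congr rfl fun i _ => by ring
    have h6 : ∑ i, Λ i y z * (v x ⬝ᵥ bv i - (1 / 2 : ℝ) * (v x ⬝ᵥ (am i).mulVec (v x)))
        = 0 := by
      apply Finset.sum_eq_zero
      intro i _
      rw [hvanish x hx i, mul_zero]
    have h7 : ∑ j, y j * c j = ∑ j, (y j * (v x ⬝ᵥ β j z)
        - (1 / 2 : ℝ) * (y j * (v x ⬝ᵥ (A j z).mulVec (v x)))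
        - y j * v' x j + y j * u₀ j) := by
      exact Finset.sum_congr rfl fun j _ => by rw [hc]; ring
    rw [h3, h4, h7, Finset.sum_add_distrib, Finset.sum_sub_distrib,
      Finset.sum_sub_distrib, ← Finset.mul_sum]
    have := h5.trans h6
    linarith [this]
  have hczero : ∀ j : Fin d, c j = 0 := by
    intro j
    obtain ⟨y₀, hy₀⟩ := hUne
    obtain ⟨ε, hε, hball⟩ := Metric.isOpen_iff.1 hUopen y₀ hy₀
    set t : ℝ := ε / 2 with ht
    have htpos : 0 < t := by positivity
    have hmem : y₀ + t • (Pi.single j 1 : Fin d → ℝ) ∈ U := by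
      apply hball
      rw [Metric.mem_ball, dist_eq_norm]
      have : y₀ + t • (Pi.single j 1 : Fin d → ℝ) - y₀
          = t • (Pi.single j 1 : Fin d → ℝ) := by abel
      rw [this, norm_smul]
      have h1 : ‖(Pi.single j 1 : Fin d → ℝ)‖ ≤ 1 := by
        apply pi_norm_le_iff_of_nonneg zero_le_one |>.2
        intro k
        by_cases hk : k = j <;> simp [Pi.single_apply, hk]
      calc ‖t‖ * ‖(Pi.single j 1 : Fin d → ℝ)‖ ≤ ‖t‖ * 1 := by
            exact mul_le_mul_of_nonneg_left h1 (norm_nonneg _)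
        _ = t := by rw [mul_one, Real.norm_eq_abs, abs_of_pos htpos]
        _ < ε := by rw [ht]; linarith
    have e1 := (hH x hx z y₀ hy₀).trans (expand y₀)
    have e2 := (hH x hx z _ hmem).trans (expand (y₀ + t • (Pi.single j 1 : Fin d → ℝ)))
    have e3 : ∑ k, (y₀ + t • (Pi.single j 1 : Fin d → ℝ)) k * c k
        = (∑ k, y₀ k * c k) + t * c j := by
      have : ∀ k : Fin d, (y₀ + t • (Pi.single j 1 : Fin d → ℝ)) k * c k
          = y₀ k * c k + t * (Pi.single j 1 : Fin d → ℝ) k * c k := by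
        intro k; simp [Pi.add_apply, Pi.smul_apply]; ring
      rw [Finset.sum_congr rfl fun k _ => this k, Finset.sum_add_distrib]
      congr 1
      rw [Finset.sum_eq_single j]
      · simp
      · intro k _ hk; simp [Pi.single_apply, hk]
      · simp
    rw [e3] at e2
    have heq := e1.symm.trans e2
    have : t * c j = 0 := by linear_combination heq.symm
    exact (mul_eq_zero.1 this).resolve_left (ne_of_gt htpos)
  funext k
  have hck := hczero k
  rw [hc] at hck
  simp only [Pi.sub_apply, Finset.sum_apply, Pi.smul_apply, smul_eq_mul]
  have hs1 : ∑ i, (β i z ⬝ᵥ v x) * (Pi.single i 1 : Fin d → ℝ) k = β k z ⬝ᵥ v x := by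
    rw [Finset.sum_eq_single k]
    · simp
    · intro i _ hi; simp [Pi.single_apply, hi]
    · simp
  have hs2 : ∑ i, (v x ⬝ᵥ (A i z).mulVec (v x)) * (Pi.single i 1 : Fin d → ℝ) k
      = v x ⬝ᵥ (A k z).mulVec (v x) := by
    rw [Finset.sum_eq_single k]
    · simp
    · intro i _ hi; simp [Pi.single_apply, hi]
    · simp
  rw [hs1, hs2]
  have hcomm : β k z ⬝ᵥ v x = v x ⬝ᵥ β k z := dotProduct_comm _ _
  rw [hcomm]
  simp only [Pi.smul_apply] at hck ⊢
  linarith [hck]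
end

section
/- Let U ⊆ ℝ^d be a nonempty open set, let v : [0,∞) → ℝ^d be differentiable with v(0) = 0 and set u₀ := v'(0). Let N ∈ ℕ, Λ₁,…,Λ_N : ℝ^d × {1,…,n} → ℝ, b₁,…,b_N ∈ ℝ^d, symmetric matrices a₁,…,a_N ∈ ℝ^{d×d}, and β₀,…,β_d : {1,…,n} → ℝ^d, A₀,…,A_d : {1,…,n} → ℝ^{d×d}. Define b(y,z) = Σ_{i=1}^N Λ_i(y,z) b_i + β₀(z) + Σ_{i=1}^d y_i β_i(z) and a(y,z) = Σ_{i=1}^N Λ_i(y,z) a_i + A₀(z) + Σ_{i=1}^d y_i A_i(z). Assume: (i) ⟨v(x), b_i⟩ − (1/2)⟨v(x), a_i v(x)⟩ = 0 for all x ≥ 0 and all i = 1,…,N; (ii) H : [0,∞) × {1,…,n} → ℝ satisfies H(x,z) = ⟨v(x), b(y,z)⟩ − (1/2)⟨v(x), a(y,z) v(x)⟩ − ⟨v'(x), y⟩ + ⟨u₀, y⟩ for all x ≥ 0, all z and all y ∈ U. Then for all x ≥ 0 and all z ∈ {1,…,n}: H(x,z) = ⟨v(x), β₀(z)⟩ −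 (1/2)⟨v(x), A₀(z) v(x)⟩. -/
open Matrix BigOperators

private lemma dot_sum_aux {d M : ℕ} (v : Fin d → ℝ) (w : Fin M → Fin d → ℝ) :
    v ⬝ᵥ (∑ i, w i) = ∑ i, v ⬝ᵥ w i := by
  simp only [dotProduct, Finset.sum_apply, Finset.mul_sum]
  exact Finset.sum_comm

private lemma sum_mulVec_aux {d M : ℕ} (Ms : Fin M → Matrix (Fin d) (Fin d) ℝ)
    (w : Fin d → ℝ) : (∑ i, Ms i) *ᵥ w = ∑ i, (Ms i) *ᵥ w := by
  funext j
  simp only [Matrix.mulVec, dotProduct, Finset.sum_apply, Matrix.sum_apply, Finset.sum_mul]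
  exact Finset.sum_comm

/-- Second conclusion (the explicit formula (15) for `H`) of the theorem on affine
interest-rate term structures. -/
theorem stmt_3 (n d : ℕ) (hn : 1 ≤ n) (hd : 1 ≤ d)
    (U : Set (Fin d → ℝ)) (hUne : U.Nonempty) (hUopen : IsOpen U)
    (v v' : ℝ → Fin d → ℝ)
    (hv : ∀ x : ℝ, 0 ≤ x → HasDerivAt v (v' x) x)
    (hv0 : v 0 = 0)
    (u₀ : Fin d → ℝ) (hu₀ : u₀ = v' 0)
    (N : ℕ) (Λ : Fin N → (Fin d → ℝ) → Fin n → ℝ)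
    (bv : Fin N → Fin d → ℝ) (am : Fin N → Matrix (Fin d) (Fin d) ℝ)
    (ham : ∀ i, (am i).IsSymm)
    (β₀ : Fin n → Fin d → ℝ) (β : Fin d → Fin n → Fin d → ℝ)
    (A₀ : Fin n → Matrix (Fin d) (Fin d) ℝ) (A : Fin d → Fin n → Matrix (Fin d) (Fin d) ℝ)
    (b : (Fin d → ℝ) → Fin n → Fin d → ℝ)
    (hb : ∀ (y : Fin d → ℝ) (z : Fin n),
      b y z = (∑ i, Λ i y z • bv i) + β₀ z + ∑ i, y i • β i z)
    (a : (Fin d → ℝ) → Fin n → Matrix (Fin d) (Fin d) ℝ)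
    (ha : ∀ (y : Fin d → ℝ) (z : Fin n),
      a y z = (∑ i, Λ i y z • am i) + A₀ z + ∑ i, y i • A i z)
    (hvanish : ∀ x : ℝ, 0 ≤ x → ∀ i : Fin N,
      v x ⬝ᵥ bv i - (1 / 2 : ℝ) * (v x ⬝ᵥ (am i).mulVec (v x)) = 0)
    (H : ℝ → Fin n → ℝ)
    (hH : ∀ x : ℝ, 0 ≤ x → ∀ z : Fin n, ∀ y ∈ U,
      H x z = v x ⬝ᵥ b y z - (1 / 2 : ℝ) * (v x ⬝ᵥ (a y z).mulVec (v x))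
        - v' x ⬝ᵥ y + u₀ ⬝ᵥ y) :
    ∀ x : ℝ, 0 ≤ x → ∀ z : Fin n,
      H x z = v x ⬝ᵥ β₀ z - (1 / 2 : ℝ) * (v x ⬝ᵥ (A₀ z).mulVec (v x)) := by
  intro x hx z
  obtain ⟨y₀, hy₀⟩ := hUne
  set C : ℝ := v x ⬝ᵥ β₀ z - (1 / 2 : ℝ) * (v x ⬝ᵥ (A₀ z).mulVec (v x)) with hC
  set c : Fin d → ℝ := fun i =>
    v x ⬝ᵥ β i z - (1 / 2 : ℝ) * (v x ⬝ᵥ (A i z).mulVec (v x)) - v' x i + u₀ i with hc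
  have key : ∀ y ∈ U, H x z = C + ∑ i, y i * c i := by
    intro y hy
    rw [hH x hx z y hy, hb, ha]
    have h1 : v x ⬝ᵥ ((∑ i, Λ i y z • bv i) + β₀ z + ∑ i, y i • β i z)
        = (∑ i, Λ i y z * (v x ⬝ᵥ bv i)) + v x ⬝ᵥ β₀ z
          + ∑ i, y i * (v x ⬝ᵥ β i z) := by
      rw [dotProduct_add, dotProduct_add, dot_sum_aux, dot_sum_aux]
      simp [dotProduct_smul, smul_eq_mul]
    have h2 : v x ⬝ᵥ (((∑ i, Λ i y z • am i) + A₀ z + ∑ i, y i • A i z).mulVec (v x))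
        = (∑ i, Λ i y z * (v x ⬝ᵥ (am i).mulVec (v x)))
          + v x ⬝ᵥ (A₀ z).mulVec (v x)
          + ∑ i, y i * (v x ⬝ᵥ (A i z).mulVec (v x)) := by
      rw [Matrix.add_mulVec, Matrix.add_mulVec, sum_mulVec_aux, sum_mulVec_aux,
        dotProduct_add, dotProduct_add, dot_sum_aux, dot_sum_aux]
      simp [Matrix.smul_mulVec, dotProduct_smul, smul_eq_mul]
    have h3 : v' x ⬝ᵥ y = ∑ i, y i * v' x i := by
      simp [dotProduct, mul_comm]
    have h4 : u₀ ⬝ᵥ y = ∑ i, y i * u₀ i := by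
      simp [dotProduct, mul_comm]
    rw [h1, h2, h3, h4]
    have hvan : ∑ i, Λ i y z * (v x ⬝ᵥ bv i)
        - (1 / 2 : ℝ) * ∑ i, Λ i y z * (v x ⬝ᵥ (am i).mulVec (v x)) = 0 := by
      rw [Finset.mul_sum, ← Finset.sum_sub_distrib]
      refine Finset.sum_eq_zero fun i _ => ?_
      have := hvanish x hx i
      linear_combination Λ i y z * this
    have hsum : ∑ i, y i * c i
        = (∑ i, y i * (v x ⬝ᵥ β i z))
          - (1 / 2 : ℝ) * ∑ i, y i * (v x ⬝ᵥ (A i z).mulVec (v x))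
          - ∑ i, y i * v' x i + ∑ i, y i * u₀ i := by
      rw [Finset.mul_sum, ← Finset.sum_sub_distrib, ← Finset.sum_sub_distrib,
        ← Finset.sum_add_distrib]
      refine Finset.sum_congr rfl fun i _ => ?_
      simp [hc]; ring
    rw [hC, hsum]
    have := hvan
    ring_nf
    ring_nf at this ⊢
    linarith [hvan]
  -- show each c i = 0
  obtain ⟨ε, hε, hball⟩ := Metric.isOpen_iff.mp hUopen y₀ hy₀
  have hcz : ∀ i, c i = 0 := by
    intro i
    set y₁ : Fin d → ℝ := fun j => y₀ j + if j = i then ε / 2 else 0 with hy₁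
    have hy₁U : y₁ ∈ U := by
      apply hball
      rw [Metric.mem_ball, dist_pi_lt_iff hε]
      intro j
      by_cases hij : j = i
      · simp [hy₁, hij, Real.dist_eq, abs_of_pos hε]
        linarith
      · simp [hy₁, hij, Real.dist_eq, hε]
    have e1 := key y₀ hy₀
    have e2 := key y₁ hy₁U
    rw [e1] at e2
    have hsplit : ∑ j, y₁ j * c j = (∑ j, y₀ j * c j) + ε / 2 * c i := by
      have step : ∀ j, y₁ j * c j = y₀ j * c j + (if j = i then ε / 2 * c i else 0) := by
        intro j
        by_cases hij : j = i
        · subst hij; simp [hy₁]; ring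
        · simp [hy₁, hij]
      rw [Finset.sum_congr rfl fun j _ => step j, Finset.sum_add_distrib,
        Finset.sum_ite_eq' Finset.univ i (fun _ => ε / 2 * c i)]
      simp
    rw [hsplit] at e2
    have hεc : ε / 2 * c i = 0 := by linarith
    exact (mul_eq_zero.mp hεc).resolve_left (ne_of_gt (half_pos hε))
  rw [key y₀ hy₀]
  simp [hcz]
end

section
/- Let v : [0,∞) → ℝ^d be differentiable with v(0) = 0 and set u₀ := v'(0). Let b : ℝ^d × {1,…,n} → ℝ^d and a : ℝ^d × {1,…,n} → ℝ^{d×d} (symmetric-matrix valued) be Borel measurable, and let H : [0,∞) × {1,…,n} → ℝ. Assume that for all x ≥ 0, all z ∈ {1,…,n} and all y ∈ ℝ^d: H(x,z) = ⟨v(x), b(y,z)⟩ − (1/2)⟨v(x), a(y,z) v(x)⟩ − ⟨v'(x), y⟩ + ⟨u₀, y⟩. Then there exist an integer N ≤ (d+1)(d+2)/2, functions Λ₁,…,Λ_N : ℝ^d × {1,…,n} → ℝ, vectors b₁,…,b_N ∈ ℝ^d, symmetric matrices a₁,…,a_N ∈ ℝ^{d×d}, and coefficients β₀,…,β_d : {1,…,n}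 → ℝ^d, A₀,…,A_d : {1,…,n} → ℝ^{d×d}, such that for all y ∈ ℝ^d and all z: b(y,z) = Σ_{i=1}^N Λ_i(y,z) b_i + β₀(z) + Σ_{i=1}^d y_i β_i(z) and a(y,z) = Σ_{i=1}^N Λ_i(y,z) a_i + A₀(z) + Σ_{i=1}^d y_i A_i(z), and moreover ⟨v(x), b_i⟩ − (1/2)⟨v(x), a_i v(x)⟩ = 0 for all x ≥ 0 and all i = 1,…,N. -/
open Matrix BigOperators

noncomputable def fLin (d : ℕ) (w : Fin d → ℝ) :
    ((Fin d → ℝ) × Matrix (Fin d) (Fin d) ℝ) →ₗ[ℝ] ℝ where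
  toFun p := w ⬝ᵥ p.1 - (1/2 : ℝ) * (w ⬝ᵥ p.2.mulVec w)
  map_add' p q := by
    simp [Matrix.add_mulVec, dotProduct_add]
    ring
  map_smul' c p := by
    simp [Matrix.smul_mulVec, smul_eq_mul]
    ring

def symSub (d : ℕ) : Submodule ℝ ((Fin d → ℝ) × Matrix (Fin d) (Fin d) ℝ) where
  carrier := {p | p.2.IsSymm}
  add_mem' hp hq := hp.add hq
  zero_mem' := Matrix.isSymm_zero
  smul_mem' c p hp := hp.smul c

noncomputable def symEmbed (d : ℕ) :
    ↥(symSub d) →ₗ[ℝ] (Fin d → ℝ) × (Sym2 (Fin d) → ℝ) where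
  toFun p := (p.val.1, fun s => p.val.2 s.out.1 s.out.2)
  map_add' p q := by ext <;> simp
  map_smul' c p := by ext <;> simp

theorem symEmbed_injective (d : ℕ) : Function.Injective (symEmbed d) := by
  rw [← LinearMap.ker_eq_bot, LinearMap.ker_eq_bot']
  intro p hp
  have h1 : p.val.1 = 0 := congrArg Prod.fst hp
  have h2 : ∀ s : Sym2 (Fin d), p.val.2 s.out.1 s.out.2 = 0 :=
    fun s => congrFun (congrArg Prod.snd hp) s
  have hsym : p.val.2.IsSymm := p.property
  have h3 : p.val.2 = 0 := by
    ext i j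
    have hm : s(((s(i, j) : Sym2 (Fin d)).out).1, ((s(i, j) : Sym2 (Fin d)).out).2)
        = s(i, j) := by
      exact Quot.out_eq _
    rcases Sym2.eq_iff.mp hm with ⟨hi, hj⟩ | ⟨hi, hj⟩
    · have := h2 s(i, j); rw [hi, hj] at this; simpa using this
    · have := h2 s(i, j); rw [hi, hj] at this
      simpa using (hsym.apply i j).symm.trans this
  ext
  · rw [h1]; rfl
  · rw [Submodule.coe_zero]
    exact congrFun (congrFun (congrArg (fun m => m) h3) _) _

theorem symSub_finrank_le (d : ℕ) :
    Module.finrank ℝ ↥(symSub d) ≤ (d + 1) * (d + 2) / 2 := by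
  have h1 : Module.finrank ℝ ↥(symSub d)
      ≤ Module.finrank ℝ ((Fin d → ℝ) × (Sym2 (Fin d) → ℝ)) :=
    LinearMap.finrank_le_finrank_of_injective (symEmbed_injective d)
  rw [Module.finrank_prod, Module.finrank_pi, Module.finrank_pi] at h1
  rw [Fintype.card_fin, Sym2.card, Fintype.card_fin] at h1
  refine h1.trans ?_
  have h2 : (d + 1) * (d + 2) = (d + 1) * d + (d + 1) * 2 := by ring
  rw [h2, Nat.add_mul_div_right _ _ (by norm_num : 0 < 2), Nat.choose_two_right,
    Nat.add_sub_cancel]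
  omega

set_option maxHeartbeats 1000000 in
set_option synthInstance.maxHeartbeats 1000000 in
/-- Deterministic core of the proposition on the structure of the drift `b` and
diffusion matrix `a` of the driving process in an affine interest-rate term
structure: `b` and `a` decompose into an affine part plus a part built from
quadratic polynomials vanishing along the curve `v`. -/
theorem stmt_4 (n d : ℕ) (hn : 1 ≤ n) (hd : 1 ≤ d)
    (v v' : ℝ → Fin d → ℝ)
    (hv : ∀ x : ℝ, 0 ≤ x → HasDerivAt v (v' x) x)
    (hv0 : v 0 = 0)
    (u₀ : Fin d → ℝ) (hu₀ : u₀ = v' 0)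
    (b : (Fin d → ℝ) → Fin n → Fin d → ℝ)
    (hbmeas : ∀ z : Fin n, Measurable (fun y => b y z))
    (a : (Fin d → ℝ) → Fin n → Matrix (Fin d) (Fin d) ℝ)
    (hameas : ∀ (z : Fin n) (i j : Fin d), Measurable (fun y => a y z i j))
    (hasymm : ∀ (y : Fin d → ℝ) (z : Fin n), (a y z).IsSymm)
    (H : ℝ → Fin n → ℝ)
    (hH : ∀ x : ℝ, 0 ≤ x → ∀ z : Fin n, ∀ y : Fin d → ℝ,
      H x z = v x ⬝ᵥ b y z - (1 / 2 : ℝ) * (v x ⬝ᵥ (a y z).mulVec (v x))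
        - v' x ⬝ᵥ y + u₀ ⬝ᵥ y) :
    ∃ (N : ℕ) (Λ : Fin N → (Fin d → ℝ) → Fin n → ℝ)
      (bv : Fin N → Fin d → ℝ) (am : Fin N → Matrix (Fin d) (Fin d) ℝ)
      (β₀ : Fin n → Fin d → ℝ) (β : Fin d → Fin n → Fin d → ℝ)
      (A₀ : Fin n → Matrix (Fin d) (Fin d) ℝ)
      (A : Fin d → Fin n → Matrix (Fin d) (Fin d) ℝ),
      N ≤ (d + 1) * (d + 2) / 2 ∧
      (∀ i, (am i).IsSymm) ∧
      (∀ (y : Fin d → ℝ) (z : Fin n),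
        b y z = (∑ i, Λ i y z • bv i) + β₀ z + ∑ i, y i • β i z) ∧
      (∀ (y : Fin d → ℝ) (z : Fin n),
        a y z = (∑ i, Λ i y z • am i) + A₀ z + ∑ i, y i • A i z) ∧
      (∀ x : ℝ, 0 ≤ x → ∀ i : Fin N,
        v x ⬝ᵥ bv i - (1 / 2 : ℝ) * (v x ⬝ᵥ (am i).mulVec (v x)) = 0) := by
  classical
  haveI : FiniteDimensional ℝ ↥(symSub d) := inferInstance
  set p : (Fin d → ℝ) → Fin n → ↥(symSub d) := fun y z => ⟨(b y z, a y z), hasymm y z⟩ with hpdef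
  set f : ℝ → ↥(symSub d) →ₗ[ℝ] ℝ := fun x => (fLin d (v x)).comp (symSub d).subtype with hfdef
  have hfval : ∀ (x : ℝ) (m : ↥(symSub d)),
      f x m = v x ⬝ᵥ m.val.1 - (1/2 : ℝ) * (v x ⬝ᵥ m.val.2.mulVec (v x)) := by
    intro x m; rfl
  have hf : ∀ x : ℝ, 0 ≤ x → ∀ (z : Fin n) (y : Fin d → ℝ),
      f x (p y z) = H x z + v' x ⬝ᵥ y - u₀ ⬝ᵥ y := by
    intro x hx z y
    rw [hfval]
    have h := hH x hx z y
    show v x ⬝ᵥ b y z - (1/2 : ℝ) * (v x ⬝ᵥ (a y z).mulVec (v x)) = _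
    linarith [h]
  set V : Submodule ℝ ↥(symSub d) := ⨅ x ∈ Set.Ici (0:ℝ), LinearMap.ker (f x) with hVdef
  have hVmem : ∀ m : ↥(symSub d), m ∈ V ↔ ∀ x : ℝ, 0 ≤ x → f x m = 0 := by
    intro m
    simp [hVdef, Submodule.mem_iInf, Set.mem_Ici, LinearMap.mem_ker]
  obtain ⟨U, hU⟩ := V.exists_isCompl
  have hdec : ∀ m : ↥(symSub d), ∃ q : ↥(symSub d) × ↥(symSub d), q.1 ∈ V ∧ q.2 ∈ U ∧ m = q.1 + q.2 := by
    intro m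
    have hm : m ∈ V ⊔ U := by rw [hU.sup_eq_top]; trivial
    obtain ⟨v1, hv1, u1, hu1, h⟩ := Submodule.mem_sup.mp hm
    exact ⟨(v1, u1), hv1, hu1, h.symm⟩
  choose q hqV hqU hqsum using hdec
  set gV : ↥(symSub d) → ↥(symSub d) := fun m => (q m).1 with hgVdef
  set gU : ↥(symSub d) → ↥(symSub d) := fun m => (q m).2 with hgUdef
  have hfU : ∀ x : ℝ, 0 ≤ x → ∀ m : ↥(symSub d), f x (gU m) = f x m := by
    intro x hx m
    have h1 : f x m = f x (gV m) + f x (gU m) := by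
      conv_lhs => rw [hqsum m]
      exact map_add _ _ _
    have h0 : f x (gV m) = 0 := (hVmem _).mp (hqV m) x hx
    rw [h1, h0, zero_add]
  have hUzero : ∀ m : ↥(symSub d), m ∈ U → (∀ x : ℝ, 0 ≤ x → f x m = 0) → m = 0 := by
    intro m hm h0
    have hmem : m ∈ V ⊓ U := ⟨(hVmem m).mpr h0, hm⟩
    rw [hU.inf_eq_bot] at hmem
    exact (Submodule.mem_bot ℝ).mp hmem
  set e : Fin d → (Fin d → ℝ) := fun i => Pi.single i 1 with hedef
  have haff : ∀ (y : Fin d → ℝ) (z : Fin n),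
      gU (p y z) = gU (p 0 z) + ∑ i, y i • (gU (p (e i) z) - gU (p 0 z)) := by
    intro y z
    have hD : gU (p y z) - gU (p 0 z) - ∑ i, y i • (gU (p (e i) z) - gU (p 0 z)) = 0 := by
      apply hUzero
      · exact U.sub_mem (U.sub_mem (hqU _) (hqU _))
          (Submodule.sum_mem U fun i _ => U.smul_mem _ (U.sub_mem (hqU _) (hqU _)))
      · intro x hx
        rw [map_sub, map_sub, map_sum]
        simp only [_root_.map_smul, map_sub, smul_eq_mul]
        simp only [hfU x hx]
        rw [hf x hx z y, hf x hx z 0]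
        have he : ∀ i, f x (p (e i) z) = H x z + (v' x i - u₀ i) := by
          intro i
          rw [hf x hx z (e i), hedef]
          simp [dotProduct_single]
          ring
        simp only [he, hf x hx z 0]
        simp only [dotProduct_zero, dotProduct, Pi.zero_apply, mul_zero,
          Finset.sum_const_zero, sub_zero, add_zero, add_sub_cancel_left]
        have hsum : ∑ i, y i * (v' x i - u₀ i)
            = (∑ i, v' x i * y i) - ∑ i, u₀ i * y i := by
          rw [← Finset.sum_sub_distrib]
          exact Finset.sum_congr rfl fun i _ => by ring
        rw [hsum]
        ring
    rw [sub_sub] at hD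
    exact sub_eq_zero.mp hD
  -- basis of V
  haveI : FiniteDimensional ℝ ↥V := inferInstance
  haveI : Module.Free ℝ ↥V := Module.Free.of_divisionRing ℝ ↥V
  set N := Module.finrank ℝ ↥V with hNdef
  set B := Module.finBasis ℝ ↥V with hBdef
  have hNle : N ≤ (d + 1) * (d + 2) / 2 :=
    le_trans (Submodule.finrank_le V) (symSub_finrank_le d)
  refine ⟨N, fun i y z => B.repr ⟨gV (p y z), hqV _⟩ i,
    fun i => ((B i : ↥V) : ↥(symSub d)).val.1, fun i => ((B i : ↥V) : ↥(symSub d)).val.2,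
    fun z => (gU (p 0 z)).val.1,
    fun i z => (gU (p (e i) z) - gU (p 0 z)).val.1,
    fun z => (gU (p 0 z)).val.2,
    fun i z => (gU (p (e i) z) - gU (p 0 z)).val.2,
    hNle, ?_, ?_, ?_, ?_⟩
  · intro i
    exact ((B i : ↥V) : ↥(symSub d)).property
  · intro y z
    have h1 : p y z = (∑ i, (B.repr ⟨gV (p y z), hqV _⟩ i) • ((B i : ↥V) : ↥(symSub d)))
        + gU (p 0 z) + ∑ i, y i • (gU (p (e i) z) - gU (p 0 z)) := by
      have hrep : (∑ i, (B.repr ⟨gV (p y z), hqV _⟩ i) • (B i)) =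
          (⟨gV (p y z), hqV _⟩ : ↥V) := B.sum_repr _
      have hrep' : (∑ i, (B.repr ⟨gV (p y z), hqV _⟩ i) • ((B i : ↥V) : ↥(symSub d))) = gV (p y z) := by
        have h := congrArg (Subtype.val) hrep
        push_cast at h
        simpa using h
      rw [hrep', add_assoc, ← haff y z]
      exact hqsum _
    have h2 := congrArg (fun m : ↥(symSub d) => (m : (Fin d → ℝ) × Matrix (Fin d) (Fin d) ℝ).1) h1
    simpa [Prod.fst_sum, Prod.smul_fst, Prod.fst_sub] using h2
  · intro y z
    have h1 : p y z = (∑ i, (B.repr ⟨gV (p y z), hqV _⟩ i) • ((B i : ↥V) : ↥(symSub d)))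
        + gU (p 0 z) + ∑ i, y i • (gU (p (e i) z) - gU (p 0 z)) := by
      have hrep : (∑ i, (B.repr ⟨gV (p y z), hqV _⟩ i) • (B i)) =
          (⟨gV (p y z), hqV _⟩ : ↥V) := B.sum_repr _
      have hrep' : (∑ i, (B.repr ⟨gV (p y z), hqV _⟩ i) • ((B i : ↥V) : ↥(symSub d))) = gV (p y z) := by
        have h := congrArg (Subtype.val) hrep
        push_cast at h
        simpa using h
      rw [hrep', add_assoc, ← haff y z]
      exact hqsum _
    have h2 := congrArg (fun m : ↥(symSub d) => (m : (Fin d → ℝ) × Matrix (Fin d) (Fin d) ℝ).2) h1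
    simpa [Prod.snd_sum, Prod.smul_snd, Prod.snd_sub] using h2
  · intro x hx i
    have hmem : ((B i : ↥V) : ↥(symSub d)) ∈ V := (B i).property
    have := (hVmem _).mp hmem x hx
    rw [hfval] at this
    exact this
end

section
/- Let n ≥ 1, T > 0, let Q ∈ ℝ^{n×n} have nonnegative off-diagonal entries, let c₀ ∈ ℝ^n, and let H : [0,T] × {1,…,n} → ℝ be continuous in the first variable. Suppose w : [0,T] → ℝ^n is differentiable with w_j(0) > 0 for every j ∈ {1,…,n} and w_j'(x) = Σ_{k=1}^n Q_{jk} w_k(x) + (H(x,j) − c₀_j) w_j(x) for all x ∈ [0,T] and all j. Then w_j(x) > 0 for all x ∈ [0,T] and all j ∈ {1,…,n}. -/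
open Matrix BigOperators

/-- Positivity claim: a solution of the linear system
`w' = (Q − C₀ + diag(H(x,·))) w` (with `Q` having nonnegative off-diagonal
entries) with componentwise strictly positive initial data stays strictly
positive on `[0, T]`. -/
theorem stmt_6 (n : ℕ) (hn : 1 ≤ n) (T : ℝ) (hT : 0 < T)
    (Q : Matrix (Fin n) (Fin n) ℝ)
    (hQoff : ∀ i j : Fin n, i ≠ j → 0 ≤ Q i j)
    (c₀ : Fin n → ℝ)
    (H : ℝ → Fin n → ℝ)
    (hH : ∀ j : Fin n, ContinuousOn (fun x => H x j) (Set.Icc 0 T))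
    (w : ℝ → Fin n → ℝ)
    (hw : ∀ x ∈ Set.Icc (0 : ℝ) T, ∀ j : Fin n,
      HasDerivWithinAt (fun t => w t j)
        ((∑ k, Q j k * w x k) + (H x j - c₀ j) * w x j) (Set.Icc 0 T) x)
    (hw0 : ∀ j : Fin n, 0 < w 0 j) :
    ∀ x ∈ Set.Icc (0 : ℝ) T, ∀ j : Fin n, 0 < w x j := by
  by_contra hcon
  push_neg at hcon
  obtain ⟨x₀, hx₀, j₀, hj₀⟩ := hcon
  have wcont : ∀ j : Fin n, ContinuousOn (fun t => w t j) (Set.Icc 0 T) :=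
    fun j x hx => (hw x hx j).continuousWithinAt
  -- the bad set
  set B : Set ℝ := ⋃ j : Fin n, (Set.Icc 0 T ∩ (fun t => w t j) ⁻¹' Set.Iic 0) with hB
  have hBclosed : IsClosed B := by
    apply isClosed_iUnion_of_finite
    intro j
    exact (wcont j).preimage_isClosed_of_isClosed isClosed_Icc isClosed_Iic
  have hBne : B.Nonempty := ⟨x₀, Set.mem_iUnion.2 ⟨j₀, hx₀, hj₀⟩⟩
  have hBbdd : BddBelow B := by
    refine ⟨0, fun y hy => ?_⟩
    simp only [hB, Set.mem_iUnion] at hy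
    obtain ⟨j, hy1, _⟩ := hy
    exact hy1.1
  set t := sInf B with ht
  have htB : t ∈ B := hBclosed.csInf_mem hBne hBbdd
  simp only [hB, Set.mem_iUnion] at htB
  obtain ⟨j, ⟨ht0, htT⟩, htle⟩ := htB
  simp only [Set.mem_preimage, Set.mem_Iic] at htle
  have htpos : 0 < t := lt_of_le_of_ne ht0 (by
    intro h; exact absurd htle (by rw [← h]; exact not_le.2 (hw0 j)))
  -- below t, everything is positive
  have hpos : ∀ y, 0 ≤ y → y < t → ∀ k, 0 < w y k := by
    intro y hy0 hyt k
    by_contra hk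
    push_neg at hk
    have : y ∈ B := Set.mem_iUnion.2 ⟨k, ⟨hy0, le_trans (le_of_lt hyt) htT⟩, hk⟩
    exact absurd (csInf_le hBbdd this) (not_le.2 hyt)
  -- nonnegativity on [0, t]
  have hnonneg : ∀ y ∈ Set.Icc (0 : ℝ) t, ∀ k, 0 ≤ w y k := by
    intro y ⟨hy0, hyt⟩ k
    rcases lt_or_eq_of_le hyt with h | h
    · exact le_of_lt (hpos y hy0 h k)
    · subst h
      have hne : (nhdsWithin t (Set.Ico 0 t)).NeBot := by
        apply mem_closure_iff_nhdsWithin_neBot.mp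
        rw [closure_Ico (ne_of_lt htpos)]
        exact Set.right_mem_Icc.mpr (le_of_lt htpos)
      have htend : Filter.Tendsto (fun s => w s k) (nhdsWithin t (Set.Ico 0 t))
          (nhds (w t k)) := by
        have := (wcont k t ⟨le_of_lt htpos, htT⟩).tendsto
        exact this.mono_left (nhdsWithin_mono t (fun s hs => ⟨hs.1, le_trans (le_of_lt hs.2) htT⟩))
      refine ge_of_tendsto htend ?_
      filter_upwards [self_mem_nhdsWithin] with s hs
      exact le_of_lt (hpos s hs.1 hs.2 k)
  have htj : w t j = 0 := le_antisymm htle (hnonneg t ⟨le_of_lt htpos, le_refl t⟩ j)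
  -- bound
  obtain ⟨M, hM⟩ := isCompact_Icc.exists_bound_of_continuousOn (hH j)
  set C : ℝ := M + |Q j j| + |c₀ j| with hC
  have hcoef : ∀ x ∈ Set.Icc (0 : ℝ) T, 0 ≤ Q j j + (H x j - c₀ j) + C := by
    intro x hx
    have h1 : -M ≤ H x j := neg_le_of_abs_le (hM x hx)
    have h2 : -|Q j j| ≤ Q j j := neg_abs_le _
    have h3 : -|c₀ j| ≤ -c₀ j := neg_le_neg (le_abs_self _)
    simp only [hC]; linarith
  -- Gronwall: u x = w x j * exp (C x) is monotone on [0, t]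
  set u : ℝ → ℝ := fun x => w x j * Real.exp (C * x) with hu
  have hsub : Set.Icc (0 : ℝ) t ⊆ Set.Icc 0 T := Set.Icc_subset_Icc le_rfl htT
  have hucont : ContinuousOn u (Set.Icc 0 t) := by
    apply ContinuousOn.mul ((wcont j).mono hsub)
    exact (Real.continuous_exp.comp (continuous_const.mul continuous_id)).continuousOn
  have hint : interior (Set.Icc (0 : ℝ) t) = Set.Ioo 0 t := interior_Icc
  have humono : MonotoneOn u (Set.Icc 0 t) := by
    apply monotoneOn_of_hasDerivWithinAt_nonneg (convex_Icc 0 t) hucont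
      (f' := fun x => ((∑ k, Q j k * w x k) + (H x j - c₀ j) * w x j) * Real.exp (C * x)
        + w x j * (Real.exp (C * x) * C))
    · intro x hx
      rw [hint] at hx
      have hxT : x ∈ Set.Icc (0 : ℝ) T := hsub ⟨le_of_lt hx.1, le_of_lt hx.2⟩
      have hderw : HasDerivWithinAt (fun s => w s j)
          ((∑ k, Q j k * w x k) + (H x j - c₀ j) * w x j) (interior (Set.Icc 0 t)) x :=
        (hw x hxT j).mono (by rw [hint]; exact fun s hs => hsub ⟨le_of_lt hs.1, le_of_lt hs.2⟩)
      have hdere : HasDerivAt (fun s => Real.exp (C * s)) (Real.exp (C * x) * C) x := by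
        simpa using ((hasDerivAt_id x).const_mul C).exp
      exact hderw.mul (hdere.hasDerivWithinAt)
    · intro x hx
      rw [hint] at hx
      have hxIcc : x ∈ Set.Icc (0 : ℝ) t := ⟨le_of_lt hx.1, le_of_lt hx.2⟩
      have hxT : x ∈ Set.Icc (0 : ℝ) T := hsub hxIcc
      have hwx : 0 ≤ w x j := hnonneg x hxIcc j
      have hsum : Q j j * w x j ≤ ∑ k, Q j k * w x k := by
        have : ∀ k ∈ Finset.univ, (if k = j then Q j j * w x j else 0) ≤ Q j k * w x k := by
          intro k _
          by_cases hk : k = j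
          · subst hk; simp
          · simp only [hk, if_false]
            exact mul_nonneg (hQoff j k (fun h => hk h.symm)) (hnonneg x hxIcc k)
        calc Q j j * w x j = ∑ k, (if k = j then Q j j * w x j else 0) := by
              rw [Finset.sum_ite_eq' Finset.univ j fun _ => Q j j * w x j]; simp
          _ ≤ ∑ k, Q j k * w x k := Finset.sum_le_sum this
      have hexp : 0 < Real.exp (C * x) := Real.exp_pos _
      have key : 0 ≤ (Q j j + (H x j - c₀ j) + C) * w x j := by
        exact mul_nonneg (hcoef x hxT) hwx
      nlinarith [mul_nonneg (mul_nonneg (hcoef x hxT) hwx) (le_of_lt hexp),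
        mul_le_mul_of_nonneg_right hsum (le_of_lt hexp)]
  have h0t : u 0 ≤ u t := humono ⟨le_refl 0, le_of_lt htpos⟩
    ⟨le_of_lt htpos, le_refl t⟩ (le_of_lt htpos)
  have hu0 : 0 < u 0 := by simp [hu, hw0 j]
  have hut : u t = 0 := by simp [hu, htj]
  linarith
end

section
/- Let u₀, β₁, A₁ ∈ ℝ with A₁ ≠ 0, β₁ ≠ 0 and β₁² = −2 u₀ A₁. Let T > 0 and let v : [0,T] → ℝ be differentiable with v(0) = 0 and v'(x) = u₀ + β₁ v(x) − (A₁/2) v(x)² for all x ∈ [0,T]. Then for every x ∈ [0,T] one has x ≠ 2/β₁ and v'(x) = −2 / (A₁ (x − 2/β₁)²). -/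
/-- Degenerate (double-root) case of the corollary solving the scalar Riccati
equation `v' = u₀ + β₁ v − (A₁/2) v²`, `v(0) = 0`, when `β₁² = −2u₀A₁`:
the slope curve is `v'(x) = −2/(A₁ (x − 2/β₁)²)`. -/
theorem stmt_11 (u₀ β₁ A₁ : ℝ) (hA₁ : A₁ ≠ 0) (hβ₁ : β₁ ≠ 0)
    (hdeg : β₁ ^ 2 = -2 * u₀ * A₁)
    (T : ℝ) (hT : 0 < T) (v : ℝ → ℝ)
    (hv : ∀ x ∈ Set.Icc (0 : ℝ) T,
      HasDerivAt v (u₀ + β₁ * v x - A₁ / 2 * v x ^ 2) x)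
    (hv0 : v 0 = 0) :
    ∀ x ∈ Set.Icc (0 : ℝ) T,
      x ≠ 2 / β₁ ∧
      u₀ + β₁ * v x - A₁ / 2 * v x ^ 2 = -2 / (A₁ * (x - 2 / β₁) ^ 2) := by
  have hu₀ : u₀ = -β₁ ^ 2 / (2 * A₁) := by
    field_simp
    linarith [hdeg]
  set w : ℝ → ℝ := fun x => v x - β₁ / A₁ with hwdef
  have hrw : ∀ x, u₀ + β₁ * v x - A₁ / 2 * v x ^ 2 = -(A₁ / 2) * w x ^ 2 := by
    intro x
    simp only [hwdef, hu₀]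
    field_simp
    ring
  have hw : ∀ x ∈ Set.Icc (0 : ℝ) T, HasDerivAt w (-(A₁ / 2) * w x ^ 2) x := by
    intro x hx
    have := (hv x hx).sub_const (β₁ / A₁)
    rw [hrw x] at this
    exact this
  set L : ℝ → ℝ := fun x => A₁ / 2 * (x - 2 / β₁) with hLdef
  set h : ℝ → ℝ := fun x => w x * L x - 1 with hhdef
  have hh' : ∀ x ∈ Set.Icc (0 : ℝ) T,
      HasDerivAt h (-(A₁ / 2) * w x * h x) x := by
    intro x hx
    have hLd : HasDerivAt L (A₁ / 2) x := by
      simpa using ((hasDerivAt_id x).sub_const (2 / β₁)).const_mul (A₁ / 2)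
    have := ((hw x hx).mul hLd).sub_const 1
    refine HasDerivAt.congr_deriv this ?_
    simp only [hhdef, hLdef]
    ring
  have hcontw : ContinuousOn w (Set.Icc (0 : ℝ) T) :=
    fun x hx => (hw x hx).continuousAt.continuousWithinAt
  obtain ⟨K, hK⟩ := isCompact_Icc.exists_bound_of_continuousOn
    ((continuousOn_const.mul hcontw) : ContinuousOn (fun x => -(A₁ / 2) * w x) _)
  have h0 : h 0 = 0 := by
    simp only [hhdef, hwdef, hLdef, hv0]
    field_simp
    ring
  have hzero : ∀ x ∈ Set.Icc (0 : ℝ) T, h x = 0 := by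
    intro x hx
    have hconth : ContinuousOn h (Set.Icc (0 : ℝ) T) :=
      fun y hy => (hh' y hy).continuousAt.continuousWithinAt
    have := norm_le_gronwallBound_of_norm_deriv_right_le (δ := 0) (ε := 0)
      hconth
      (fun y hy => ((hh' y (Set.Ico_subset_Icc_self hy)).hasDerivWithinAt))
      (by simp [h0])
      (fun y hy => by
        have hb := hK y (Set.Ico_subset_Icc_self hy)
        have hnm : ‖-(A₁ / 2) * w y * h y‖ = ‖-(A₁ / 2) * w y‖ * ‖h y‖ :=
          norm_mul _ _
        rw [hnm, add_zero]
        exact mul_le_mul_of_nonneg_right hb (norm_nonneg _))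
      x hx
    rw [gronwallBound_ε0] at this
    simp only [zero_mul] at this
    exact norm_eq_zero.mp (le_antisymm (by simpa using this) (norm_nonneg _))
  intro x hx
  have hxL : w x * L x = 1 := by have := hzero x hx; simp only [hhdef] at this; linarith
  have hxne : x ≠ 2 / β₁ := by
    intro hxeq
    rw [hxeq] at hxL
    simp [hLdef] at hxL
  have hLne : L x ≠ 0 := by
    intro hL0
    rw [hL0, mul_zero] at hxL
    exact one_ne_zero hxL.symm
  have hxsub : x - 2 / β₁ ≠ 0 := sub_ne_zero.mpr hxne
  refine ⟨hxne, ?_⟩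
  rw [hrw x]
  have hxL2 : w x * (A₁ * (x - 2 / β₁)) = 2 := by
    simp only [hLdef] at hxL
    linear_combination 2 * hxL
  have hden : A₁ * (x - 2 / β₁) ^ 2 ≠ 0 := by positivity
  rw [eq_div_iff hden]
  linear_combination (-(1 / 2) * (w x * (A₁ * (x - 2 / β₁)) + 2)) * hxL2
end

section
/- Let V and W be finite-dimensional real normed vector spaces, each equipped with its Borel σ-algebra, and let f : V → W be Borel measurable. Then f is affine (i.e., there exist a linear map T : V → W and a vector w₀ ∈ W such that f(x) = T(x) + w₀ for all x ∈ V) if and only if for all x, v, w ∈ V and all ε > 0 one has f(x + ε(v + w)) − f(x + ε w) − f(x + ε v) + f(x) = 0. -/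
open MeasureTheory Metric Filter Topology Pointwise

private lemma measurable_additive_continuous
    {V W : Type*}
    [NormedAddCommGroup V] [NormedSpace ℝ V] [FiniteDimensional ℝ V]
    [NormedAddCommGroup W] [NormedSpace ℝ W]
    [MeasurableSpace V] [BorelSpace V] [MeasurableSpace W] [BorelSpace W]
    (G : V →+ W) (hG : Measurable G) : Continuous G := by
  let μ : Measure V := Measure.addHaar
  -- find n with positive measure set where ‖G x‖ ≤ n
  have hmeas : ∀ n : ℕ, MeasurableSet (closedBall (0:V) 1 ∩ {x | ‖G x‖ ≤ n}) := by
    intro n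
    exact measurableSet_closedBall.inter ((hG.norm) measurableSet_Iic)
  obtain ⟨n, hn⟩ : ∃ n : ℕ, 0 < μ (closedBall (0:V) 1 ∩ {x | ‖G x‖ ≤ n}) := by
    by_contra hcon
    push_neg at hcon
    have h0 : μ (⋃ n : ℕ, closedBall (0:V) 1 ∩ {x | ‖G x‖ ≤ n}) = 0 := by
      refine measure_iUnion_null fun n => le_antisymm (hcon n) zero_le
    have hsub : closedBall (0:V) 1 ⊆ ⋃ n : ℕ, closedBall (0:V) 1 ∩ {x | ‖G x‖ ≤ n} := by
      intro x hx
      obtain ⟨n, hn⟩ := exists_nat_ge ‖G x‖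
      exact Set.mem_iUnion.2 ⟨n, hx, hn⟩
    have : μ (closedBall (0:V) 1) = 0 := le_antisymm (h0 ▸ measure_mono hsub) zero_le
    exact absurd this (measure_closedBall_pos μ 0 one_pos).ne'
  set A : Set V := closedBall (0:V) 1 ∩ {x | ‖G x‖ ≤ n} with hA
  have hU : A - A ∈ 𝓝 (0:V) :=
    Measure.sub_mem_nhds_zero_of_addHaar_pos μ A (hmeas n) hn
  have hbound : ∀ y ∈ A - A, ‖G y‖ ≤ 2 * n := by
    rintro y ⟨a, ha, b, hb, rfl⟩
    rw [map_sub]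
    calc ‖G a - G b‖ ≤ ‖G a‖ + ‖G b‖ := norm_sub_le _ _
      _ ≤ n + n := add_le_add ha.2 hb.2
      _ = 2 * n := by ring
  -- continuity at 0
  have hcont0 : ContinuousAt G 0 := by
    rw [ContinuousAt, map_zero]
    rw [NormedAddCommGroup.tendsto_nhds_zero]
    intro ε hε
    obtain ⟨m, hm⟩ : ∃ m : ℕ, 2 * n < m * ε ∧ 0 < m := by
      obtain ⟨m, hm⟩ := exists_nat_gt (max (2 * n / ε) 0)
      refine ⟨m, ?_, ?_⟩
      · rw [← div_lt_iff₀ hε]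
        exact (le_max_left _ _).trans_lt hm
      · exact_mod_cast (le_max_right _ _).trans_lt hm
    have hsmul_cont : Continuous fun x : V => (m : ℝ) • x := continuous_const_smul _
    have hpre : {x : V | (m : ℝ) • x ∈ A - A} ∈ 𝓝 (0:V) := by
      have := hsmul_cont.continuousAt (x := (0:V))
      rw [ContinuousAt, smul_zero] at this
      exact this hU
    filter_upwards [hpre] with x hx
    have h1 : G ((m : ℝ) • x) = m • G x := by
      rw [Nat.cast_smul_eq_nsmul, map_nsmul]
    have h2 : ‖G ((m : ℝ) • x)‖ ≤ 2 * n := hbound _ hx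
    rw [h1] at h2
    rw [← Nat.cast_smul_eq_nsmul ℝ, norm_smul, Real.norm_natCast] at h2
    have hmpos : (0:ℝ) < m := by exact_mod_cast hm.2
    calc ‖G x‖ = m * ‖G x‖ / m := by field_simp
      _ ≤ 2 * n / m := by gcongr
      _ < ε := by rw [div_lt_iff₀ hmpos]; linarith [hm.1]
  exact continuous_of_continuousAt_zero G hcont0

/-- A Borel measurable function between finite-dimensional real normed vector
spaces is affine if and only if all its second-order difference quotients
vanish. -/
theorem stmt_15 (V W : Type*)
    [NormedAddCommGroup V] [NormedSpace ℝ V] [FiniteDimensional ℝ V]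
    [NormedAddCommGroup W] [NormedSpace ℝ W] [FiniteDimensional ℝ W]
    [MeasurableSpace V] [BorelSpace V] [MeasurableSpace W] [BorelSpace W]
    (f : V → W) (hf : Measurable f) :
    (∃ (T : V →ₗ[ℝ] W) (w₀ : W), ∀ x : V, f x = T x + w₀) ↔
    (∀ (x v w : V) (ε : ℝ), 0 < ε →
      f (x + ε • (v + w)) - f (x + ε • w) - f (x + ε • v) + f x = 0) := by
  constructor
  · rintro ⟨T, w₀, hT⟩ x v w ε hε
    simp only [hT, map_add, _root_.map_smul, smul_add]
    abel
  · intro h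
    have hadd : ∀ v w : V, (f (v + w) - f 0) = (f v - f 0) + (f w - f 0) := by
      intro v w
      have h1 := h 0 v w 1 one_pos
      simp only [one_smul, zero_add] at h1
      rw [← sub_eq_zero, ← h1]
      abel
    set G : V →+ W := AddMonoidHom.mk' (fun x => f x - f 0) hadd with hGdef
    have hGmeas : Measurable G := hf.sub measurable_const
    have hGcont : Continuous G := measurable_additive_continuous G hGmeas
    refine ⟨(G.toRealLinearMap hGcont).toLinearMap, f 0, fun x => ?_⟩
    show f x = G x + f 0
    simp [hGdef]
end
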